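/- arXiv:2407.02281 — 3 statements merged into one kernel-verified Lean document; each statement's English description precedes it below -/
import Mathlib

section
/- Let (G, P_X) be a probabilistic graph on finite vertex set X, and S ⊆ X with P_X(S) > 0. Then the chromatic entropy satisfies H_χ(G, P_X) − 1 − (1 − P_X(S))·log₂|X| ≤ H_χ(G[S], P_X/P_X(S)) ≤ H_χ(G, P_X)/P_X(S), where G[S] is the induced subgraph on S and P_X/P_X(S) is the conditional distribution of X given X ∈ S. -/
open Finset

noncomputable def H2 {A : Type*} [Fintype A] (p : A → ℝ) : ℝ :=
  -∑ a, p a * Real.logb 2 (p a)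

noncomputable def colorEntropy {V : Type*} [Fintype V] (p : V → ℝ) (c : V → ℕ) : ℝ :=
  -∑ k ∈ Finset.univ.image c,
      (∑ v ∈ Finset.univ.filter (fun v => c v = k), p v) *
        Real.logb 2 (∑ v ∈ Finset.univ.filter (fun v => c v = k), p v)

noncomputable def Hchi {V : Type*} [Fintype V] (G : SimpleGraph V) (p : V → ℝ) : ℝ :=
  sInf {x | ∃ c : V → ℕ, (∀ u v, G.Adj u v → c u ≠ c v) ∧ x = colorEntropy p c}

open Real

/-!
A proper colouring `c` of `G` restricts to one of `G[S]`, and with `P = P_X(S)` Gibbs' inequality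
against the weights `P · P(c(X) = k)` gives `P · H(c|_S, P_X/P) + P log P ≤ H(c(X))`; since
`P log P ≤ 0` this is the upper bound. Conversely a colouring `c'` of `G[S]` extends to `G` by
giving every vertex outside `S` a colour of its own. The extension has entropy
`P · H(c', P_X/P) - P log P - ∑_{v ∉ S} p v log p v`, and the last two terms are at most the
binary entropy of `P` (at most `1`) plus `(1 - P) log |X|` (maximum entropy on `X \ S`).
-/

lemma sum_mul_logb_le_sum_mul_logb {ι : Type*} {s : Finset ι} {a b : ι → ℝ} {β : ℝ}
    (hβ : 1 < β) (ha : ∀ i ∈ s, 0 ≤ a i) (hb : ∀ i ∈ s, 0 ≤ b i)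
    (hab : ∀ i ∈ s, 0 < b i → 0 < a i) (hsum : ∑ i ∈ s, a i ≤ ∑ i ∈ s, b i) :
    ∑ i ∈ s, b i * logb β (a i) ≤ ∑ i ∈ s, b i * logb β (b i) := by
  have hlogβ : 0 < log β := log_pos hβ
  have hterm : ∀ i ∈ s, b i * logb β (a i) - b i * logb β (b i) ≤ (a i - b i) / log β := by
    intro i hi
    rcases (hb i hi).eq_or_lt with hb0 | hb0
    · simpa [← hb0] using div_nonneg (ha i hi) hlogβ.le
    have ha0 := hab i hi hb0
    calc b i * logb β (a i) - b i * logb β (b i) = b i * log (a i / b i) / log β := by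
          rw [log_div ha0.ne' hb0.ne', logb, logb]; ring
      _ ≤ b i * (a i / b i - 1) / log β := by
          gcongr; exact log_le_sub_one_of_pos (div_pos ha0 hb0)
      _ = (a i - b i) / log β := by field_simp
  have hsum_terms := sum_le_sum hterm
  rw [sum_sub_distrib, ← sum_div, sum_sub_distrib] at hsum_terms
  have : (∑ i ∈ s, a i - ∑ i ∈ s, b i) / log β ≤ 0 :=
    div_nonpos_of_nonpos_of_nonneg (by linarith) hlogβ.le
  linarith

lemma neg_sum_mul_logb_add_le {ι : Type*} {s : Finset ι} {r q : ι → ℝ}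
    (hr : ∀ i ∈ s, 0 ≤ r i) (hrq : ∀ i ∈ s, r i ≤ q i) (hq : ∑ i ∈ s, q i ≤ 1) :
    -∑ i ∈ s, r i * logb 2 (r i) + (∑ i ∈ s, r i) * logb 2 (∑ i ∈ s, r i)
      ≤ -∑ i ∈ s, q i * logb 2 (q i) := by
  set P := ∑ i ∈ s, r i
  have hq0 : ∀ i ∈ s, 0 ≤ q i := fun i hi => (hr i hi).trans (hrq i hi)
  have hP : 0 ≤ P := sum_nonneg hr
  have hgibbs := sum_mul_logb_le_sum_mul_logb (a := fun i => q i * P) one_lt_two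
    (fun i hi => mul_nonneg (hq0 i hi) hP) hr
    (fun i hi hri => mul_pos (hri.trans_le (hrq i hi)) (hri.trans_le (single_le_sum hr hi)))
    (by rw [← sum_mul]; exact mul_le_of_le_one_left hP hq)
  have hsplit :
      ∑ i ∈ s, r i * logb 2 (q i * P) = ∑ i ∈ s, r i * logb 2 (q i) + P * logb 2 P := by
    rw [sum_mul, ← sum_add_distrib]
    refine sum_congr rfl fun i hi => ?_
    rcases (hr i hi).eq_or_lt with hri | hri
    · simp [← hri]
    rw [logb_mul (hri.trans_le (hrq i hi)).ne' (hri.trans_le (single_le_sum hr hi)).ne']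
    ring
  have hmono : ∑ i ∈ s, q i * logb 2 (q i) ≤ ∑ i ∈ s, r i * logb 2 (q i) :=
    sum_le_sum fun i hi => mul_le_mul_of_nonpos_right (hrq i hi)
      (logb_nonpos one_lt_two (hq0 i hi) ((single_le_sum hq0 hi).trans hq))
  linarith

lemma neg_sum_mul_logb_le {ι : Type*} {s : Finset ι} {p : ι → ℝ} {n : ℝ}
    (hp : ∀ i ∈ s, 0 ≤ p i) (hn : (#s : ℝ) ≤ n) :
    -∑ i ∈ s, p i * logb 2 (p i)
      ≤ (∑ i ∈ s, p i) * logb 2 n - (∑ i ∈ s, p i) * logb 2 (∑ i ∈ s, p i) := by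
  rcases s.eq_empty_or_nonempty with rfl | hs
  · simp
  set Q := ∑ i ∈ s, p i
  have hQ0 : 0 ≤ Q := sum_nonneg hp
  have hn0 : 0 < n := lt_of_lt_of_le (by exact_mod_cast hs.card_pos) hn
  have hgibbs := sum_mul_logb_le_sum_mul_logb (a := fun _ => Q / n) one_lt_two
    (fun _ _ => div_nonneg hQ0 hn0.le) hp
    (fun i hi hpi => div_pos (hpi.trans_le (single_le_sum hp hi)) hn0)
    (by
      rw [sum_const, nsmul_eq_mul]
      calc (#s : ℝ) * (Q / n) ≤ n * (Q / n) := by gcongr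
        _ = Q := mul_div_cancel₀ _ hn0.ne')
  have huniform : ∑ i ∈ s, p i * logb 2 (Q / n) = Q * logb 2 Q - Q * logb 2 n := by
    rw [← sum_mul]
    rcases hQ0.eq_or_lt with hQ | hQ
    · rw [← hQ]; simp
    rw [logb_div hQ.ne' hn0.ne']
    ring
  linarith

lemma neg_mul_logb_sub_mul_logb_le_one {P Q : ℝ} (h : P + Q = 1) :
    -(P * logb 2 P) - Q * logb 2 Q ≤ 1 := by
  obtain rfl : Q = 1 - P := by linarith
  have hlog2 : 0 < log 2 := log_pos one_lt_two
  calc -(P * logb 2 P) - (1 - P) * logb 2 (1 - P) = binEntropy P / log 2 := by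
        simp only [binEntropy, logb, log_inv]; ring
    _ ≤ log 2 / log 2 := by gcongr; exact binEntropy_le_log_two
    _ = 1 := div_self hlog2.ne'

lemma colorEntropy_eq_sum_vertex {V : Type*} [Fintype V] (p : V → ℝ) (c : V → ℕ) :
    colorEntropy p c = -∑ v, p v * logb 2 (∑ w with c w = c v, p w) := by
  rw [colorEntropy, ← sum_fiberwise_of_maps_to (g := c) (t := univ.image c)
    fun v _ => mem_image_of_mem c (mem_univ v)]
  congr 1
  refine sum_congr rfl fun k _ => ?_
  rw [sum_mul]
  refine sum_congr rfl fun v hv => ?_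
  rw [(mem_filter.1 hv).2]

lemma colorEntropy_nonneg {V : Type*} [Fintype V] {p : V → ℝ} (hp : p ∈ stdSimplex ℝ V)
    (c : V → ℕ) : 0 ≤ colorEntropy p c := by
  rw [colorEntropy, neg_nonneg]
  refine sum_nonpos fun k _ => ?_
  have hmass : 0 ≤ ∑ v with c v = k, p v := sum_nonneg fun v _ => hp.1 v
  refine mul_nonpos_of_nonneg_of_nonpos hmass (logb_nonpos one_lt_two hmass ?_)
  exact hp.2 ▸ sum_le_univ_sum_of_nonneg hp.1

lemma mul_colorEntropy_div {V : Type*} [Fintype V] {p : V → ℝ} (hp : ∀ v, 0 ≤ p v)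
    (hP : 0 < ∑ v, p v) (c : V → ℕ) :
    (∑ v, p v) * colorEntropy (fun v => p v / ∑ u, p u) c
      = colorEntropy p c + (∑ v, p v) * logb 2 (∑ v, p v) := by
  set P := ∑ v, p v
  have hterm : ∀ v, P * (p v / P * logb 2 ((∑ w with c w = c v, p w) / P))
      = p v * logb 2 (∑ w with c w = c v, p w) - p v * logb 2 P := by
    intro v
    rcases (hp v).eq_or_lt with hv | hv
    · simp [← hv]
    have hmass : 0 < ∑ w with c w = c v, p w :=
      hv.trans_le (single_le_sum (fun w _ => hp w) (by simp))
    rw [logb_div hmass.ne' hP.ne']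
    field_simp
  simp only [colorEntropy_eq_sum_vertex, ← sum_div, mul_neg, mul_sum]
  rw [sum_congr rfl fun v _ => hterm v, sum_sub_distrib, ← sum_mul]
  ring

lemma hchi_le_colorEntropy {V : Type*} [Fintype V] {G : SimpleGraph V} {p : V → ℝ}
    (hp : p ∈ stdSimplex ℝ V) {c : V → ℕ} (hc : ∀ u v, G.Adj u v → c u ≠ c v) :
    Hchi G p ≤ colorEntropy p c :=
  csInf_le ⟨0, by rintro _ ⟨c, -, rfl⟩; exact colorEntropy_nonneg hp c⟩ ⟨c, hc, rfl⟩

lemma le_hchi {V : Type*} [Fintype V] {G : SimpleGraph V} {p : V → ℝ} {x : ℝ}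
    (h : ∀ c : V → ℕ, (∀ u v, G.Adj u v → c u ≠ c v) → x ≤ colorEntropy p c) :
    x ≤ Hchi G p := by
  refine le_csInf ⟨_, fun v => Fintype.equivFin V v,
    fun u v huv h => huv.ne ((Fintype.equivFin V).injective (Fin.ext h)), rfl⟩ ?_
  rintro _ ⟨c, hc, rfl⟩
  exact h c hc

lemma sum_univ_filter_finset_coe {V : Type*} [Fintype V] (S : Finset V) (q : V → Prop)
    [DecidablePred q] (f : V → ℝ) :
    ∑ v ∈ (univ : Finset ↥(S : Set V)).filter (fun v => q v.1), f v
      = ∑ v ∈ S with q v, f v := by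
  rw [sum_filter, sum_filter]
  exact Finset.sum_finset_coe (fun v => if q v then f v else 0) S

lemma colorEntropy_restrict_add_le {V : Type*} [Fintype V] {p : V → ℝ}
    (hp : p ∈ stdSimplex ℝ V) (S : Finset V) (c : V → ℕ) :
    colorEntropy (fun v : ↥(S : Set V) => p v) (fun v => c v)
        + (∑ v ∈ S, p v) * logb 2 (∑ v ∈ S, p v) ≤ colorEntropy p c := by
  set I := univ.image c
  have hmaps : ∀ v, c v ∈ I := fun v => mem_image_of_mem c (mem_univ v)
  have hrestrict : colorEntropy (fun v : ↥(S : Set V) => p v) (fun v => c v)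
      = -∑ k ∈ I, (∑ v ∈ S with c v = k, p v) * logb 2 (∑ v ∈ S with c v = k, p v) := by
    rw [colorEntropy]
    have hmass : ∀ k, ∑ v ∈ (univ : Finset ↥(S : Set V)).filter (fun v => c v.1 = k), p v
        = ∑ v ∈ S with c v = k, p v :=
      fun k => sum_univ_filter_finset_coe S (fun v => c v = k) p
    simp only [hmass]
    congr 1
    refine sum_subset (fun k hk => ?_) fun k _ hk => ?_
    · obtain ⟨v, -, rfl⟩ := mem_image.1 hk
      exact hmaps v
    · rw [sum_eq_zero fun v hv => absurd (mem_image.2 ⟨⟨v, (mem_filter.1 hv).1⟩,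
        mem_univ _, (mem_filter.1 hv).2⟩) hk]
      simp
  rw [hrestrict, ← sum_fiberwise_of_maps_to fun v _ => hmaps v]
  refine neg_sum_mul_logb_add_le (fun k _ => sum_nonneg fun v _ => hp.1 v)
    (fun k _ => sum_le_sum_of_subset_of_nonneg
      (filter_subset_filter _ (subset_univ S)) fun v _ _ => hp.1 v) ?_
  rw [sum_fiberwise_of_maps_to fun v _ => hmaps v, hp.2]

lemma exists_colorEntropy_eq_of_induce {V : Type*} [Fintype V] [DecidableEq V]
    (G : SimpleGraph V) (p : V → ℝ) (S : Finset V) (c' : ↥(S : Set V) → ℕ)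
    (hc' : ∀ u v, (G.induce (S : Set V)).Adj u v → c' u ≠ c' v) :
    ∃ c : V → ℕ, (∀ u v, G.Adj u v → c u ≠ c v) ∧
      colorEntropy p c
        = colorEntropy (fun v : ↥(S : Set V) => p v) c' - ∑ v ∈ Sᶜ, p v * logb 2 (p v) := by
  let e := Fintype.equivFin V
  -- even colours on `S` copy `c'`, odd colours give each vertex outside `S` a class of its own
  let c : V → ℕ := fun v => if h : v ∈ S then 2 * c' ⟨v, h⟩ else 2 * e v + 1
  have hcS : ∀ v (h : v ∈ S), c v = 2 * c' ⟨v, h⟩ := fun v h => dif_pos h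
  have hcSc : ∀ v, v ∉ S → c v = 2 * e v + 1 := fun v h => dif_neg h
  have heq_of_notMem : ∀ w v, v ∉ S → c w = c v → w = v := by
    intro w v hv hwv
    by_cases hw : w ∈ S
    · rw [hcS w hw, hcSc v hv] at hwv; omega
    · rw [hcSc w hw, hcSc v hv] at hwv
      exact e.injective (Fin.ext (by omega))
  have hclassS : ∀ v (h : v ∈ S),
      ∑ w with c w = c v, p w = ∑ w : ↥(S : Set V) with c' w = c' ⟨v, h⟩, p w := by
    intro v h
    have hout : ∀ w ∉ S, (if c w = c v then p w else 0) = 0 := fun w hw =>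
      if_neg fun (hwv : c w = c v) => hw (heq_of_notMem v w hw hwv.symm ▸ h)
    rw [sum_filter, sum_filter,
      ← sum_subset (subset_univ S) fun w _ hw => hout w hw, ← Finset.sum_finset_coe]
    refine sum_congr rfl fun w _ => ?_
    simp [hcS w w.2, hcS v h]
  have hclassSc : ∀ v ∉ S, ∑ w with c w = c v, p w = p v := by
    intro v hv
    rw [sum_filter, sum_eq_single v
      (fun w _ hwv => if_neg fun (h : c w = c v) => hwv (heq_of_notMem w v hv h)) (by simp),
      if_pos rfl]
  refine ⟨c, fun u v huv hcuv => ?_, ?_⟩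
  · by_cases hv : v ∈ S
    · by_cases hu : u ∈ S
      · exact hc' ⟨u, hu⟩ ⟨v, hv⟩ huv (by rw [hcS u hu, hcS v hv] at hcuv; omega)
      · exact huv.ne (heq_of_notMem v u hu hcuv.symm).symm
    · exact huv.ne (heq_of_notMem u v hv hcuv)
  have hsumS : ∑ v ∈ S, p v * logb 2 (∑ w with c w = c v, p w)
      = ∑ v : ↥(S : Set V), p v * logb 2 (∑ w : ↥(S : Set V) with c' w = c' v, p w) := by
    rw [← Finset.sum_finset_coe]
    exact sum_congr rfl fun v _ => by rw [hclassS v v.2]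
  have hsumSc : ∑ v ∈ Sᶜ, p v * logb 2 (∑ w with c w = c v, p w)
      = ∑ v ∈ Sᶜ, p v * logb 2 (p v) :=
    sum_congr rfl fun v hv => by rw [hclassSc v (mem_compl.1 hv)]
  rw [colorEntropy_eq_sum_vertex, colorEntropy_eq_sum_vertex, ← sum_add_sum_compl S,
    hsumS, hsumSc]
  ring

lemma cond_mem_stdSimplex {V : Type*} [Fintype V] {p : V → ℝ} (hp : ∀ v, 0 ≤ p v)
    {S : Finset V} (hS : 0 < ∑ v ∈ S, p v) :
    (fun v : ↥(S : Set V) => p v / ∑ u ∈ S, p u) ∈ stdSimplex ℝ ↥(S : Set V) :=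
  ⟨fun v => div_nonneg (hp v) hS.le, by
    rw [← sum_div, Finset.sum_finset_coe p S, div_self hS.ne']⟩

lemma mul_colorEntropy_cond {V : Type*} [Fintype V] {p : V → ℝ} (hp : ∀ v, 0 ≤ p v)
    {S : Finset V} (hS : 0 < ∑ v ∈ S, p v) (c : ↥(S : Set V) → ℕ) :
    (∑ v ∈ S, p v) * colorEntropy (fun v : ↥(S : Set V) => p v / ∑ u ∈ S, p u) c
      = colorEntropy (fun v : ↥(S : Set V) => p v) c
        + (∑ v ∈ S, p v) * logb 2 (∑ v ∈ S, p v) := by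
  have hsum : ∑ v : ↥(S : Set V), p v = ∑ v ∈ S, p v := Finset.sum_finset_coe p S
  have := mul_colorEntropy_div (p := fun v : ↥(S : Set V) => p v) (fun v => hp v)
    (hsum ▸ hS) c
  rwa [hsum] at this

lemma hchi_induce_le_div {V : Type*} [Fintype V] (G : SimpleGraph V) {p : V → ℝ}
    (hp : p ∈ stdSimplex ℝ V) {S : Finset V} (hS : 0 < ∑ v ∈ S, p v) :
    Hchi (G.induce (S : Set V)) (fun v => p v.1 / ∑ u ∈ S, p u)
      ≤ Hchi G p / ∑ v ∈ S, p v := by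
  rw [le_div_iff₀ hS, mul_comm]
  refine le_hchi fun c hc => ?_
  calc (∑ v ∈ S, p v) * Hchi (G.induce (S : Set V)) (fun v => p v.1 / ∑ u ∈ S, p u)
      ≤ (∑ v ∈ S, p v) * colorEntropy (fun v : ↥(S : Set V) => p v / ∑ u ∈ S, p u)
          (fun v => c v) :=
        mul_le_mul_of_nonneg_left (hchi_le_colorEntropy (cond_mem_stdSimplex hp.1 hS)
          fun u v huv => hc u v huv) hS.le
    _ = colorEntropy (fun v : ↥(S : Set V) => p v) (fun v => c v)
          + (∑ v ∈ S, p v) * logb 2 (∑ v ∈ S, p v) := mul_colorEntropy_cond hp.1 hS _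
    _ ≤ colorEntropy p c := colorEntropy_restrict_add_le hp S c

lemma hchi_sub_le_hchi_induce {V : Type*} [Fintype V] (G : SimpleGraph V) {p : V → ℝ}
    (hp : p ∈ stdSimplex ℝ V) {S : Finset V} (hS : 0 < ∑ v ∈ S, p v) :
    Hchi G p - 1 - (1 - ∑ v ∈ S, p v) * logb 2 (Fintype.card V) ≤
      Hchi (G.induce (S : Set V)) (fun v => p v.1 / ∑ u ∈ S, p u) := by
  classical
  refine le_hchi fun c' hc' => ?_
  obtain ⟨c, hc, hentropy⟩ := exists_colorEntropy_eq_of_induce G p S c' hc'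
  have hPQ : ∑ v ∈ S, p v + ∑ v ∈ Sᶜ, p v = 1 := by rw [sum_add_sum_compl, hp.2]
  have hcompl := neg_sum_mul_logb_le (fun v _ => hp.1 v)
    (by exact_mod_cast card_le_univ Sᶜ : (#Sᶜ : ℝ) ≤ Fintype.card V)
  have hbinary := neg_mul_logb_sub_mul_logb_le_one hPQ
  have hscale := mul_colorEntropy_cond hp.1 hS c'
  have hshrink := mul_le_of_le_one_left (colorEntropy_nonneg (cond_mem_stdSimplex hp.1 hS) c')
    (by linarith [sum_nonneg fun v (_ : v ∈ Sᶜ) => hp.1 v] : ∑ v ∈ S, p v ≤ 1)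
  have hHchi := hchi_le_colorEntropy hp hc
  rw [show 1 - ∑ v ∈ S, p v = ∑ v ∈ Sᶜ, p v by linarith]
  linarith

theorem stmt8 {V : Type*} [Fintype V] (G : SimpleGraph V) (p : V → ℝ)
    (hp : p ∈ stdSimplex ℝ V) (S : Finset V) (hS : 0 < ∑ v ∈ S, p v) :
    Hchi G p - 1 - (1 - ∑ v ∈ S, p v) * Real.logb 2 (Fintype.card V) ≤
      Hchi (G.induce (S : Set V)) (fun v => p v.1 / ∑ u ∈ S, p u) ∧
    Hchi (G.induce (S : Set V)) (fun v => p v.1 / ∑ u ∈ S, p u) ≤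
      Hchi G p / ∑ v ∈ S, p v :=
  ⟨hchi_sub_le_hchi_induce G hp hS, hchi_induce_le_div G hp hS⟩
end

section
/- (Type-splitting) Let A be a finite set, (a_n)_{n≥1} ∈ A^ℕ a sequence whose empirical types T_{a^n} converge to a distribution P_A ∈ Δ(A), let β ∈ (0,1) and P'_A, P''_A ∈ Δ(A) with P_A = β·P'_A + (1−β)·P''_A. Then there exists a binary sequence (b_n)_{n≥1} ∈ {0,1}^ℕ such that the empirical type of b^n converges to (β, 1−β), and the two subsequences of (a_n) extracted along {n : b_n = 0} and {n : b_n = 1} have empirical types converging to P'_A and P''_A respectively. -/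
open Finset Filter

section aux
variable {A : Type*} [DecidableEq A]

/-- number of occurrences of `x` among `a 0, ..., a (n-1)` -/
def Ncnt (a : ℕ → A) (x : A) (n : ℕ) : ℕ :=
  ((Finset.range n).filter (fun t => a t = x)).card

/-- the splitting sequence: `b t = false` iff the floor of `r (a t) * (count+1)` jumps. -/
noncomputable def bseq (a : ℕ → A) (r : A → ℝ) (t : ℕ) : Bool :=
  decide (⌊r (a t) * ((Ncnt a (a t) t : ℝ) + 1)⌋ ≤ ⌊r (a t) * (Ncnt a (a t) t : ℝ)⌋)

lemma Ncnt_succ (a : ℕ → A) (x : A) (n : ℕ) :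
    Ncnt a x (n+1) = Ncnt a x n + (if a n = x then 1 else 0) := by
  unfold Ncnt
  rw [Finset.range_add_one, Finset.filter_insert]
  split_ifs with h
  · rw [Finset.card_insert_of_notMem (by simp)]
  · rfl

lemma fc_eq (a : ℕ → A) (r : A → ℝ) (hr0 : ∀ x, 0 ≤ r x) (hr1 : ∀ x, r x ≤ 1)
    (x : A) (n : ℕ) :
    ((((Finset.range n).filter (fun t => bseq a r t = false ∧ a t = x)).card : ℤ))
      = ⌊r x * (Ncnt a x n : ℝ)⌋ := by
  induction n with
  | zero => simp [Ncnt]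
  | succ n ih =>
    rw [Finset.range_add_one, Finset.filter_insert, Ncnt_succ]
    by_cases hax : a n = x
    · have hfloor_le : ⌊r x * ((Ncnt a x n : ℝ) + 1)⌋ ≤ ⌊r x * (Ncnt a x n : ℝ)⌋ + 1 := by
        have h1 : r x * ((Ncnt a x n : ℝ) + 1) ≤ r x * (Ncnt a x n : ℝ) + 1 := by
          nlinarith [hr1 x, hr0 x]
        calc ⌊r x * ((Ncnt a x n : ℝ) + 1)⌋ ≤ ⌊r x * (Ncnt a x n : ℝ) + 1⌋ :=
              Int.floor_le_floor h1
          _ = ⌊r x * (Ncnt a x n : ℝ)⌋ + 1 := Int.floor_add_one _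
      have hfloor_ge : ⌊r x * (Ncnt a x n : ℝ)⌋ ≤ ⌊r x * ((Ncnt a x n : ℝ) + 1)⌋ :=
        Int.floor_le_floor (by nlinarith [hr0 x])
      rw [if_pos hax]
      by_cases hbn : bseq a r n = false
      · rw [if_pos ⟨hbn, hax⟩, Finset.card_insert_of_notMem (by simp)]
        have hnle : ¬ (⌊r (a n) * ((Ncnt a (a n) n : ℝ) + 1)⌋
            ≤ ⌊r (a n) * (Ncnt a (a n) n : ℝ)⌋) := by
          simpa [bseq] using hbn
        rw [hax] at hnle
        push_cast
        omega
      · have hbt : bseq a r n = true := by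
          cases h : bseq a r n
          · exact absurd h hbn
          · rfl
        rw [if_neg (fun h => hbn h.1)]
        have hle : ⌊r (a n) * ((Ncnt a (a n) n : ℝ) + 1)⌋
            ≤ ⌊r (a n) * (Ncnt a (a n) n : ℝ)⌋ := by
          simpa [bseq] using hbt
        rw [hax] at hle
        push_cast
        omega
    · rw [if_neg (fun h => hax h.2), if_neg hax]
      simpa using ih

lemma totalFalse (a : ℕ → A) [Fintype A] (r : A → ℝ) (n : ℕ) :
    (((Finset.range n).filter (fun t => bseq a r t = false)).card)
      = ∑ x : A, ((Finset.range n).filter (fun t => bseq a r t = false ∧ a t = x)).card := by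
  rw [Finset.card_eq_sum_card_fiberwise (f := a) (t := Finset.univ) (fun x _ => Finset.mem_univ _)]
  refine Finset.sum_congr rfl fun x _ => ?_
  rw [Finset.filter_filter]

lemma fiber_split (a : ℕ → A) (r : A → ℝ) (x : A) (n : ℕ) :
    ((Finset.range n).filter (fun t => bseq a r t = false ∧ a t = x)).card
      + ((Finset.range n).filter (fun t => bseq a r t = true ∧ a t = x)).card
      = Ncnt a x n := by
  unfold Ncnt
  have h := Finset.card_filter_add_card_filter_not
    (s := (Finset.range n).filter (fun t => a t = x)) (p := fun t => bseq a r t = false)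
  rw [Finset.filter_filter, Finset.filter_filter] at h
  have e1 : (Finset.range n).filter (fun t => bseq a r t = false ∧ a t = x)
      = (Finset.range n).filter (fun t => a t = x ∧ bseq a r t = false) := by
    refine Finset.filter_congr fun t _ => ?_
    constructor <;> exact fun h => ⟨h.2, h.1⟩
  have e2 : (Finset.range n).filter (fun t => bseq a r t = true ∧ a t = x)
      = (Finset.range n).filter (fun t => a t = x ∧ ¬ (bseq a r t = false)) := by
    refine Finset.filter_congr fun t _ => ?_
    cases h : bseq a r t <;> simp
  rw [e1, e2, h]

lemma totalTrue (a : ℕ → A) (r : A → ℝ) (n : ℕ) :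
    (((Finset.range n).filter (fun t => bseq a r t = false)).card)
      + (((Finset.range n).filter (fun t => bseq a r t = true)).card) = n := by
  have h := Finset.card_filter_add_card_filter_not
    (s := Finset.range n) (p := fun t => bseq a r t = false)
  have e2 : (Finset.range n).filter (fun t => bseq a r t = true)
      = (Finset.range n).filter (fun t => ¬ (bseq a r t = false)) := by
    refine Finset.filter_congr fun t _ => ?_
    cases h : bseq a r t <;> simp
  rw [e2, h, Finset.card_range]

end aux

theorem stmt10 {A : Type*} [Fintype A] [DecidableEq A] (a : ℕ → A)
    (PA P' P'' : A → ℝ) (hPA : PA ∈ stdSimplex ℝ A) (hP' : P' ∈ stdSimplex ℝ A)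
    (hP'' : P'' ∈ stdSimplex ℝ A) (β : ℝ) (hβ : β ∈ Set.Ioo (0:ℝ) 1)
    (hmix : ∀ x, PA x = β * P' x + (1 - β) * P'' x)
    (hconv : ∀ x, Filter.Tendsto
      (fun n => (((Finset.range n).filter (fun t => a t = x)).card : ℝ) / n)
      Filter.atTop (nhds (PA x))) :
    ∃ b : ℕ → Bool,
      Filter.Tendsto
        (fun n => (((Finset.range n).filter (fun t => b t = false)).card : ℝ) / n)
        Filter.atTop (nhds β) ∧
      (∀ x, Filter.Tendsto
        (fun n => (((Finset.range n).filter (fun t => b t = false ∧ a t = x)).card : ℝ) /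
          (((Finset.range n).filter (fun t => b t = false)).card : ℝ))
        Filter.atTop (nhds (P' x))) ∧
      (∀ x, Filter.Tendsto
        (fun n => (((Finset.range n).filter (fun t => b t = true ∧ a t = x)).card : ℝ) /
          (((Finset.range n).filter (fun t => b t = true)).card : ℝ))
        Filter.atTop (nhds (P'' x))) := by
  obtain ⟨hβ0, hβ1⟩ := hβ
  set r : A → ℝ := fun x => if PA x = 0 then 0 else β * P' x / PA x with hrdef
  have hPA0 : ∀ x, 0 ≤ PA x := hPA.1
  have hP'0 : ∀ x, 0 ≤ P' x := hP'.1
  have hP''0 : ∀ x, 0 ≤ P'' x := hP''.1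
  have hr0 : ∀ x, 0 ≤ r x := by
    intro x
    simp only [hrdef]
    split_ifs with h
    · exact le_refl 0
    · exact div_nonneg (mul_nonneg hβ0.le (hP'0 x)) (hPA0 x)
  have hP'zero : ∀ x, PA x = 0 → P' x = 0 := by
    intro x h
    have h1 := hmix x
    nlinarith [hP'0 x, hP''0 x]
  have hr1 : ∀ x, r x ≤ 1 := by
    intro x
    simp only [hrdef]
    split_ifs with h
    · exact zero_le_one
    · have hpos : 0 < PA x := lt_of_le_of_ne (hPA0 x) (Ne.symm h)
      rw [div_le_one hpos]
      nlinarith [hmix x, hP''0 x]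
  have hrPA : ∀ x, r x * PA x = β * P' x := by
    intro x
    simp only [hrdef]
    split_ifs with h
    · rw [hP'zero x h]; ring
    · field_simp
  -- the counting functions
  set Cf : ℕ → ℕ := fun n => ((Finset.range n).filter (fun t => bseq a r t = false)).card
    with hCf
  set Ct : ℕ → ℕ := fun n => ((Finset.range n).filter (fun t => bseq a r t = true)).card
    with hCt
  set Cfx : A → ℕ → ℕ :=
    fun x n => ((Finset.range n).filter (fun t => bseq a r t = false ∧ a t = x)).card with hCfx
  set Ctx : A → ℕ → ℕ :=
    fun x n => ((Finset.range n).filter (fun t => bseq a r t = true ∧ a t = x)).card with hCtx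
  have hNconv : ∀ x, Tendsto (fun n => (Ncnt a x n : ℝ) / n) atTop (nhds (PA x)) := by
    intro x; exact hconv x
  -- limit of Cfx/n
  have limFx : ∀ x, Tendsto (fun n => (Cfx x n : ℝ) / n) atTop (nhds (β * P' x)) := by
    intro x
    have key : ∀ n, (Cfx x n : ℝ) = ((⌊r x * (Ncnt a x n : ℝ)⌋ : ℤ) : ℝ) := by
      intro n
      rw [← fc_eq a r hr0 hr1 x n]
      push_cast
      rfl
    have hg : Tendsto (fun n : ℕ => r x * ((Ncnt a x n : ℝ) / n) - 1 / n) atTop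
        (nhds (β * P' x)) := by
      have := ((hNconv x).const_mul (r x)).sub tendsto_one_div_atTop_nhds_zero_nat
      rwa [sub_zero, hrPA x] at this
    have hh : Tendsto (fun n : ℕ => r x * ((Ncnt a x n : ℝ) / n)) atTop (nhds (β * P' x)) := by
      have := (hNconv x).const_mul (r x)
      rwa [hrPA x] at this
    refine tendsto_of_tendsto_of_tendsto_of_le_of_le' hg hh ?_ ?_
    · filter_upwards [eventually_ge_atTop 1] with n hn
      have hn' : (0:ℝ) < n := by exact_mod_cast Nat.lt_of_lt_of_le Nat.zero_lt_one hn
      rw [key]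
      have hfl : r x * (Ncnt a x n : ℝ) - 1 ≤ ((⌊r x * (Ncnt a x n : ℝ)⌋ : ℤ) : ℝ) :=
        le_of_lt (Int.sub_one_lt_floor _)
      have heq : r x * ((Ncnt a x n : ℝ) / n) - 1 / n = (r x * (Ncnt a x n : ℝ) - 1) / n := by
        ring
      rw [heq]
      exact div_le_div_of_nonneg_right hfl hn'.le
    · filter_upwards [eventually_ge_atTop 1] with n hn
      have hn' : (0:ℝ) < n := by exact_mod_cast Nat.lt_of_lt_of_le Nat.zero_lt_one hn
      rw [key]
      have hfl : ((⌊r x * (Ncnt a x n : ℝ)⌋ : ℤ) : ℝ) ≤ r x * (Ncnt a x n : ℝ) :=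
        Int.floor_le _
      have heq : r x * ((Ncnt a x n : ℝ) / n) = (r x * (Ncnt a x n : ℝ)) / n := by ring
      rw [heq]
      exact div_le_div_of_nonneg_right hfl hn'.le
  -- limit of Cf/n
  have limF : Tendsto (fun n => (Cf n : ℝ) / n) atTop (nhds β) := by
    have key : ∀ n, (Cf n : ℝ) / n = ∑ x : A, (Cfx x n : ℝ) / n := by
      intro n
      show ((((Finset.range n).filter (fun t => bseq a r t = false)).card : ℝ)) / n
        = ∑ x : A, (Cfx x n : ℝ) / n
      rw [totalFalse a r n]
      push_cast
      rw [Finset.sum_div]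
    have hsum : Tendsto (fun n => ∑ x : A, (Cfx x n : ℝ) / n) atTop
        (nhds (∑ x : A, β * P' x)) := tendsto_finset_sum _ (fun x _ => limFx x)
    have : (∑ x : A, β * P' x) = β := by
      rw [← Finset.mul_sum, hP'.2, mul_one]
    rw [this] at hsum
    exact hsum.congr (fun n => (key n).symm)
  -- limit of Ctx/n
  have limTx : ∀ x, Tendsto (fun n => (Ctx x n : ℝ) / n) atTop (nhds ((1 - β) * P'' x)) := by
    intro x
    have key : ∀ n, (Ctx x n : ℝ) = (Ncnt a x n : ℝ) - (Cfx x n : ℝ) := by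
      intro n
      have h := fiber_split a r x n
      have h2 : (Cfx x n : ℝ) + (Ctx x n : ℝ) = (Ncnt a x n : ℝ) := by
        show ((((Finset.range n).filter (fun t => bseq a r t = false ∧ a t = x)).card : ℝ))
            + ((((Finset.range n).filter (fun t => bseq a r t = true ∧ a t = x)).card : ℝ))
          = (Ncnt a x n : ℝ)
        exact_mod_cast congrArg (Nat.cast : ℕ → ℝ) h
      linarith
    have hval : PA x - β * P' x = (1 - β) * P'' x := by linarith [hmix x]
    have := (hNconv x).sub (limFx x)
    rw [hval] at this
    refine this.congr fun n => ?_
    rw [key, sub_div]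
  -- limit of Ct/n
  have limT : Tendsto (fun n => (Ct n : ℝ) / n) atTop (nhds (1 - β)) := by
    have key : ∀ n : ℕ, 1 ≤ n → (Ct n : ℝ) / n = 1 - (Cf n : ℝ) / n := by
      intro n hn
      have hn' : (n:ℝ) ≠ 0 := by
        have : (0:ℝ) < n := by exact_mod_cast Nat.lt_of_lt_of_le Nat.zero_lt_one hn
        exact ne_of_gt this
      have h := totalTrue a r n
      have h2 : (Cf n : ℝ) + (Ct n : ℝ) = (n : ℝ) := by
        show ((((Finset.range n).filter (fun t => bseq a r t = false)).card : ℝ))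
            + ((((Finset.range n).filter (fun t => bseq a r t = true)).card : ℝ)) = (n : ℝ)
        exact_mod_cast congrArg (Nat.cast : ℕ → ℝ) h
      field_simp
      linarith
    have haux : Tendsto (fun n => 1 - (Cf n : ℝ) / n) atTop (nhds (1 - β)) :=
      tendsto_const_nhds.sub limF
    refine haux.congr' ?_
    filter_upwards [eventually_ge_atTop 1] with n hn
    exact (key n hn).symm
  refine ⟨bseq a r, limF, fun x => ?_, fun x => ?_⟩
  · have haux : Tendsto (fun n => ((Cfx x n : ℝ) / n) / ((Cf n : ℝ) / n)) atTop
        (nhds ((β * P' x) / β)) := (limFx x).div limF (ne_of_gt hβ0)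
    rw [mul_div_cancel_left₀ _ (ne_of_gt hβ0)] at haux
    refine haux.congr' ?_
    filter_upwards [eventually_ge_atTop 1] with n hn
    have hn' : (n:ℝ) ≠ 0 := by
      have : (0:ℝ) < n := by exact_mod_cast Nat.lt_of_lt_of_le Nat.zero_lt_one hn
      exact ne_of_gt this
    exact div_div_div_cancel_right₀ hn' _ _
  · have h1β : (0:ℝ) < 1 - β := by linarith
    have haux : Tendsto (fun n => ((Ctx x n : ℝ) / n) / ((Ct n : ℝ) / n)) atTop
        (nhds (((1 - β) * P'' x) / (1 - β))) := (limTx x).div limT (ne_of_gt h1β)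
    rw [mul_div_cancel_left₀ _ (ne_of_gt h1β)] at haux
    refine haux.congr' ?_
    filter_upwards [eventually_ge_atTop 1] with n hn
    have hn' : (n:ℝ) ≠ 0 := by
      have : (0:ℝ) < n := by exact_mod_cast Nat.lt_of_lt_of_le Nat.zero_lt_one hn
      exact ne_of_gt this
    exact div_div_div_cancel_right₀ hn' _ _
end

section
/- Let G = (X, E) be a graph whose vertex set can be partitioned into α(G) cliques (complete induced subgraphs). Then for every n ≥ 1, α(G^{∧n}) = α(G)^n, where G^{∧n} is the n-fold AND (strong) power; consequently the zero-error capacity C₀(G) = lim_n (1/n)·log₂ α(G^{∧n}) equals log₂ α(G). -/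
open Finset

def strongPi {A : Type*} {V : A → Type*} (G : ∀ a, SimpleGraph (V a)) :
    SimpleGraph (∀ a, V a) where
  Adj u v := u ≠ v ∧ ∀ a, u a = v a ∨ (G a).Adj (u a) (v a)
  symm := ⟨by
    rintro u v ⟨hne, h⟩
    exact ⟨hne.symm, fun a => (h a).imp Eq.symm (fun h' => h'.symm)⟩⟩
  loopless := ⟨by rintro u ⟨hne, -⟩; exact hne rfl⟩

noncomputable def indepNum {V : Type*} [Fintype V] (G : SimpleGraph V) : ℕ :=
  sSup {n | ∃ s : Finset V, (↑s : Set V).Pairwise (fun u v => ¬ G.Adj u v) ∧ s.card = n}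

/-!
A partition of `G` into cliques indexed by `W` is a proper colouring of `Gᶜ` by `W`, so every
independent set of `G` meets each clique at most once and `α(G) ≤ |W|`. In a strong product the
coordinatewise clique partitions give a clique partition of the product, while a product of
independent sets is independent. With exactly `α(G)` cliques the upper bound `α(G)ⁿ` is thus
attained, and `(1/n) log₂ α(G^{∧n}) = log₂ α(G)` for every `n ≥ 1`.
-/

open Filter Topology

lemma indepNum_eq_simpleGraph_indepNum {V : Type*} [Fintype V] (G : SimpleGraph V) :
    indepNum G = G.indepNum := by
  simp only [indepNum, SimpleGraph.indepNum, SimpleGraph.isNIndepSet_iff,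
    SimpleGraph.isIndepSet_iff]

def IsCliqueCover {V W : Type*} (G : SimpleGraph V) (f : V → W) : Prop :=
  ∀ u v, f u = f v → u = v ∨ G.Adj u v

namespace IsCliqueCover

variable {V W : Type*} {G : SimpleGraph V} {f : V → W}

def coloringCompl (hf : IsCliqueCover G f) : Gᶜ.Coloring W :=
  SimpleGraph.Coloring.mk f fun {u v} huv hfuv => (hf u v hfuv).elim huv.1 huv.2

lemma indepNum_le_card [Fintype V] [Fintype W] (hf : IsCliqueCover G f) :
    indepNum G ≤ Fintype.card W := by
  obtain ⟨s, hs⟩ := G.exists_isNIndepSet_indepNum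
  rw [indepNum_eq_simpleGraph_indepNum, ← hs.card_eq]
  exact ((SimpleGraph.isClique_compl G).mpr hs.isIndepSet).card_le_of_coloring hf.coloringCompl

lemma strongPi {A : Type*} {V W : A → Type*} {G : ∀ a, SimpleGraph (V a)} {f : ∀ a, V a → W a}
    (hf : ∀ a, IsCliqueCover (G a) (f a)) :
    IsCliqueCover (strongPi G) (fun u a => f a (u a)) := by
  intro u v huv
  by_cases h : u = v
  · exact .inl h
  · exact .inr ⟨h, fun a => hf a (u a) (v a) (congrFun huv a)⟩

end IsCliqueCover

lemma isIndepSet_strongPi_pi {A : Type*} {V : A → Type*} {G : ∀ a, SimpleGraph (V a)}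
    {s : ∀ a, Set (V a)} (hs : ∀ a, (G a).IsIndepSet (s a)) :
    (strongPi G).IsIndepSet (Set.univ.pi s) := by
  intro u hu v hv huv hadj
  obtain ⟨a, ha⟩ := Function.ne_iff.mp huv
  exact (hadj.2 a).elim ha (hs a (hu a trivial) (hv a trivial) ha)

lemma prod_indepNum_le_indepNum_strongPi {A : Type*} [Fintype A] [DecidableEq A] {V : A → Type*}
    [∀ a, Fintype (V a)] (G : ∀ a, SimpleGraph (V a)) :
    ∏ a, indepNum (G a) ≤ indepNum (strongPi G) := by
  choose s hs using fun a => (G a).exists_isNIndepSet_indepNum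
  have hpi : (strongPi G).IsIndepSet (Fintype.piFinset s : Set (∀ a, V a)) := by
    rw [Fintype.coe_piFinset]
    exact isIndepSet_strongPi_pi fun a => (hs a).isIndepSet
  simpa only [indepNum_eq_simpleGraph_indepNum, Fintype.card_piFinset, (hs _).card_eq] using
    hpi.card_le_indepNum

lemma indepNum_strongPi_eq_prod {A : Type*} [Fintype A] [DecidableEq A] {V : A → Type*}
    [∀ a, Fintype (V a)] (G : ∀ a, SimpleGraph (V a)) {f : ∀ a, V a → Fin (indepNum (G a))}
    (hf : ∀ a, IsCliqueCover (G a) (f a)) :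
    indepNum (strongPi G) = ∏ a, indepNum (G a) := by
  refine le_antisymm ?_ (prod_indepNum_le_indepNum_strongPi G)
  simpa only [Fintype.card_pi, Fintype.card_fin] using (IsCliqueCover.strongPi hf).indepNum_le_card

lemma tendsto_inv_mul_logb_pow (b x : ℝ) :
    Tendsto (fun n : ℕ => (1 / n : ℝ) * Real.logb b (x ^ n)) atTop (𝓝 (Real.logb b x)) := by
  refine tendsto_const_nhds.congr' ?_
  filter_upwards [eventually_ne_atTop 0] with n hn
  rw [Real.logb_pow, one_div, inv_mul_cancel_left₀ (Nat.cast_ne_zero.mpr hn)]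

theorem stmt15 {V : Type*} [Fintype V] (G : SimpleGraph V)
    (hpart : ∃ f : V → Fin (indepNum G), ∀ u v, f u = f v → u = v ∨ G.Adj u v) :
    (∀ n : ℕ, 1 ≤ n → indepNum (strongPi (fun _ : Fin n => G)) = (indepNum G) ^ n) ∧
    Filter.Tendsto
      (fun n : ℕ => (1 / n : ℝ) * Real.logb 2 (indepNum (strongPi (fun _ : Fin n => G))))
      Filter.atTop (nhds (Real.logb 2 (indepNum G))) := by
  obtain ⟨f, hf⟩ := hpart
  have hpow (n : ℕ) : indepNum (strongPi fun _ : Fin n => G) = indepNum G ^ n := by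
    rw [indepNum_strongPi_eq_prod _ (f := fun _ => f) fun _ => hf, Finset.prod_const,
      Finset.card_univ, Fintype.card_fin]
  refine ⟨fun n _ => hpow n, ?_⟩
  simp_rw [hpow, Nat.cast_pow]
  exact tendsto_inv_mul_logb_pow 2 _
end
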